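/- Let (X, 𝔸, d) be a complete C*-algebra-valued b-metric space with coefficient A, endowed with a directed graph G with V(G) = X whose edge set contains all loops, and let f : X → X satisfy d(fx, fy) ⪯ B(d(fx, x) + d(fy, y)) for all x, y ∈ X with (x, y) ∈ E(G̃), where B is a positive element of 𝔸 commuting with every element of 𝔸 and ‖AB‖ < 1/2. Suppose (X, 𝔸, d, G) has property (P3). Then: (i) if C_f ≠ ∅, then f has a fixed point in X; (ii) if moreover the graph G has property (P4), then f has a unique fixed point in X. -/

import Mathlib

/-!
Kannan's argument. Along the Picard orbit `xₙ = fⁿ x` of a point of `C_f` the contraction gives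
`‖d(xₘ₊₁, xₙ₊₁)‖ ≤ ‖B‖ (‖d(xₘ₊₁, xₘ)‖ + ‖d(xₙ₊₁, xₙ)‖)`, and `‖B‖ ≤ ‖AB‖ < 1/2`, so consecutive
distances decay geometrically with ratio `‖B‖ / (1 - ‖B‖) < 1` and the orbit is Cauchy. At its
limit `p`, property (P3) provides infinitely many orbit points joined to `p`, and combining the
contraction at those points with the `b`-triangle inequality yields
`‖d(fp, p)‖ ≤ ‖AB‖ ‖d(fp, p)‖ + o(1)`, hence `fp = p`. Since `A` need not commute with the
distances, the coefficient `A` is moved across order inequalities by conjugating with `√A`,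
which changes neither the spectrum nor, on self-adjoint elements, the norm.
-/

open Filter Topology

section CStarAlgebra

variable {𝔸 : Type*} [CStarAlgebra 𝔸]

lemma norm_units_conj_le_of_isSelfAdjoint (u : 𝔸ˣ) {z : 𝔸}
    (h : IsSelfAdjoint (u * z * u⁻¹ : 𝔸)) : ‖(u * z * u⁻¹ : 𝔸)‖ ≤ ‖z‖ := by
  nontriviality 𝔸
  have : (‖(u * z * u⁻¹ : 𝔸)‖₊ : ENNReal) ≤ ‖z‖₊ := by
    rw [← h.spectralRadius_eq_nnnorm, spectralRadius, spectrum.units_conjugate]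
    exact spectrum.spectralRadius_le_nnnorm z
  exact_mod_cast this

variable [PartialOrder 𝔸] [StarOrderedRing 𝔸]

lemma norm_le_norm_mul_add_of_le {a b c e : 𝔸}
    (ha : 0 ≤ a) (h : a ≤ b * (c + e)) : ‖a‖ ≤ ‖b‖ * (‖c‖ + ‖e‖) :=
  calc ‖a‖ ≤ ‖b * (c + e)‖ := CStarAlgebra.norm_le_norm_of_nonneg_of_le ha h
    _ ≤ ‖b‖ * ‖c + e‖ := norm_mul_le _ _
    _ ≤ ‖b‖ * (‖c‖ + ‖e‖) := by gcongr; exact norm_add_le _ _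

lemma le_mul_of_one_le_left_of_central {a b : 𝔸}
    (ha : 1 ≤ a) (hb : 0 ≤ b) (hb_central : ∀ c, b * c = c * b) : b ≤ a * b := by
  have := Commute.mul_nonneg (sub_nonneg.mpr ha) hb (hb_central _).symm
  rwa [sub_mul, one_mul, sub_nonneg] at this

lemma norm_le_norm_mul_mul_add_of_le {A B w u v e : 𝔸} (hA : 1 ≤ A) (hB : 0 ≤ B)
    (hB_central : ∀ c, B * c = c * B) (hw : 0 ≤ w) (hu : 0 ≤ u) (hv : 0 ≤ v)
    (hwu : w ≤ A * (u + v)) (hu_le : u ≤ B * (w + e)) :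
    ‖w‖ ≤ ‖A * B‖ * ‖w‖ + ‖A‖ * (‖B‖ * ‖e‖ + ‖v‖) := by
  obtain ⟨t, ht⟩ : IsUnit (CFC.sqrt A) := (isStrictlyPositive_one.of_le hA).isUnit_cfcSqrt
  have hA0 : 0 ≤ A := zero_le_one.trans hA
  have htt : (t * t : 𝔸) = A := ht ▸ CFC.sqrt_mul_sqrt_self A hA0
  have ht_star : star (t : 𝔸) = t := ht ▸ (CFC.sqrt_nonneg A).isSelfAdjoint.star_eq
  have ht_norm : ‖(t : 𝔸)‖ * ‖(t : 𝔸)‖ = ‖A‖ := by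
    rw [ht, CFC.norm_sqrt A hA0, Real.mul_self_sqrt (norm_nonneg A)]
  have hBw : IsSelfAdjoint (B * w) := by
    rw [IsSelfAdjoint, star_mul, hw.isSelfAdjoint.star_eq, hB.isSelfAdjoint.star_eq,
      hB_central]
  have hA_conj : A * (u + v) = t * (t * (u + v) * t) * ↑t⁻¹ := by
    simp [← htt, mul_assoc]
  have hBw_conj : t * (B * w) * t = ↑t⁻¹ * (A * B * w) * ↑t⁻¹⁻¹ := by
    simp [← htt, mul_assoc]
  calc ‖w‖ ≤ ‖A * (u + v)‖ := CStarAlgebra.norm_le_norm_of_nonneg_of_le hw hwu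
    _ ≤ ‖t * (u + v) * t‖ := by
      rw [hA_conj] at hwu ⊢
      exact norm_units_conj_le_of_isSelfAdjoint t (hw.trans hwu).isSelfAdjoint
    _ ≤ ‖t * (B * w) * t + t * (B * e + v) * t‖ := by
      refine CStarAlgebra.norm_le_norm_of_nonneg_of_le ?_ ?_
      · simpa [ht_star] using star_left_conjugate_nonneg (add_nonneg hu hv) (t : 𝔸)
      · have : u + v ≤ B * w + (B * e + v) := by
          rw [← add_assoc, ← mul_add]; exact add_le_add_left hu_le v
        simpa [ht_star, mul_add, add_mul] using star_left_conjugate_le_conjugate this (t : 𝔸)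
    _ ≤ ‖t * (B * w) * t‖ + ‖t * (B * e + v) * t‖ := norm_add_le _ _
    _ ≤ ‖A * B‖ * ‖w‖ + ‖A‖ * (‖B‖ * ‖e‖ + ‖v‖) := by
      gcongr
      · rw [hBw_conj]
        refine (norm_units_conj_le_of_isSelfAdjoint _ ?_).trans (norm_mul_le _ _)
        rw [← hBw_conj]
        simpa [ht_star] using hBw.conjugate' (t : 𝔸)
      · calc ‖t * (B * e + v) * t‖ ≤ ‖(t : 𝔸)‖ * ‖B * e + v‖ * ‖(t : 𝔸)‖ := norm_mul₃_le
          _ = ‖A‖ * ‖B * e + v‖ := by rw [← ht_norm]; ring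
          _ ≤ ‖A‖ * (‖B‖ * ‖e‖ + ‖v‖) := by
            gcongr; exact (norm_add_le _ _).trans (by gcongr; exact norm_mul_le _ _)

end CStarAlgebra

lemma tendsto_zero_of_le_mul_add_succ {r : ℕ → ℝ} {b : ℝ} (hr : ∀ n, 0 ≤ r n) (hb₀ : 0 ≤ b)
    (hb : b < 1 / 2) (h : ∀ n, r (n + 1) ≤ b * (r (n + 1) + r n)) :
    Tendsto r atTop (𝓝 0) := by
  have hb₁ : 0 < 1 - b := by linarith
  have hk₀ : 0 ≤ b / (1 - b) := div_nonneg hb₀ hb₁.le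
  have hk₁ : b / (1 - b) < 1 := by rw [div_lt_one hb₁]; linarith
  have hstep : ∀ n, r (n + 1) ≤ b / (1 - b) * r n := fun n => by
    rw [div_mul_eq_mul_div, le_div_iff₀ hb₁]
    linarith [h n]
  refine squeeze_zero hr (fun n => le_geom hk₀ n fun k _ => hstep k) ?_
  simpa using (tendsto_pow_atTop_nhds_zero_of_lt_one hk₀ hk₁).mul_const (r 0)

lemma exists_forall_ge_lt_of_le_mul_add {D : ℕ → ℕ → ℝ} {r : ℕ → ℝ} (b : ℝ)
    (hD : ∀ m n, D (m + 1) (n + 1) ≤ b * (r m + r n)) (hr : Tendsto r atTop (𝓝 0)) :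
    ∀ ε : ℝ, 0 < ε → ∃ N, ∀ m ≥ N, ∀ n ≥ N, D m n < ε := by
  intro ε hε
  have hlim : Tendsto (fun mn : ℕ × ℕ => b * (r mn.1 + r mn.2)) atTop (𝓝 0) := by
    rw [← prod_atTop_atTop_eq]
    simpa using ((hr.comp tendsto_fst).add (hr.comp tendsto_snd)).const_mul b
  obtain ⟨N, hN⟩ := eventually_atTop_prod_self'.mp (hlim.eventually (gt_mem_nhds hε))
  refine ⟨N + 1, fun m hm n hn => ?_⟩
  obtain ⟨m, rfl⟩ := Nat.exists_eq_add_of_le' (Nat.one_le_of_lt hm)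
  obtain ⟨n, rfl⟩ := Nat.exists_eq_add_of_le' (Nat.one_le_of_lt hn)
  exact (hD m n).trans_lt (hN m (by omega) n (by omega))

section GraphKannan

variable {X 𝔸 : Type*} [CStarAlgebra 𝔸] [PartialOrder 𝔸]
  {d : X → X → 𝔸} {E : X → X → Prop} {f : X → X} {A B : 𝔸}

lemma norm_dist_iterate_succ_le [StarOrderedRing 𝔸] (hd_nonneg : ∀ x y, 0 ≤ d x y)
    (hcontr : ∀ x y, (E x y ∨ E y x) → d (f x) (f y) ≤ B * (d (f x) x + d (f y) y))
    {x : X} (hx : ∀ m n : ℕ, E (f^[n] x) (f^[m] x) ∨ E (f^[m] x) (f^[n] x)) (m n : ℕ) :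
    ‖d (f^[m + 1] x) (f^[n + 1] x)‖ ≤
      ‖B‖ * (‖d (f^[m + 1] x) (f^[m] x)‖ + ‖d (f^[n + 1] x) (f^[n] x)‖) := by
  simp only [Function.iterate_succ_apply']
  exact norm_le_norm_mul_add_of_le (hd_nonneg _ _) (hcontr _ _ (hx n m))

lemma eq_of_fixed_of_edge (hd_nonneg : ∀ x y, 0 ≤ d x y) (hd_eq_zero : ∀ x y, d x y = 0 ↔ x = y)
    (hcontr : ∀ x y, (E x y ∨ E y x) → d (f x) (f y) ≤ B * (d (f x) x + d (f y) y))
    {x y : X} (hxy : E x y ∨ E y x) (hx : f x = x) (hy : f y = y) : x = y := by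
  have h := hcontr x y hxy
  rw [hx, hy, (hd_eq_zero x x).mpr rfl, (hd_eq_zero y y).mpr rfl, add_zero, mul_zero] at h
  exact (hd_eq_zero x y).mp (le_antisymm h (hd_nonneg x y))

lemma fixed_of_tendsto_of_frequently_edge [StarOrderedRing 𝔸] (hA : 1 ≤ A) (hB : 0 ≤ B)
    (hB_central : ∀ c, B * c = c * B) (hnorm : ‖A * B‖ < 1) (hd_nonneg : ∀ x y, 0 ≤ d x y)
    (hd_eq_zero : ∀ x y, d x y = 0 ↔ x = y) (hd_triangle : ∀ x y z, d x y ≤ A * (d x z + d z y))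
    (hcontr : ∀ x y, (E x y ∨ E y x) → d (f x) (f y) ≤ B * (d (f x) x + d (f y) y))
    {s : ℕ → X} (hs : ∀ n, s (n + 1) = f (s n))
    (hr : Tendsto (fun n => ‖d (s (n + 1)) (s n)‖) atTop (𝓝 0)) {p : X}
    (hp : Tendsto (fun n => ‖d (s n) p‖) atTop (𝓝 0))
    (hedge : ∃ᶠ n in atTop, E (s n) p ∨ E p (s n)) : f p = p := by
  set w := d (f p) p
  have hbound : ∀ n, E (s n) p ∨ E p (s n) →
      ‖w‖ ≤ ‖A * B‖ * ‖w‖ + ‖A‖ * (‖B‖ * ‖d (s (n + 1)) (s n)‖ + ‖d (s (n + 1)) p‖) := by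
    intro n hn
    refine norm_le_norm_mul_mul_add_of_le hA hB hB_central (hd_nonneg _ _) (hd_nonneg _ _)
      (hd_nonneg _ _) (hd_triangle _ _ (s (n + 1))) ?_
    rw [hs]
    exact hcontr p (s n) hn.symm
  have hlim : Tendsto (fun n => ‖A * B‖ * ‖w‖ +
      ‖A‖ * (‖B‖ * ‖d (s (n + 1)) (s n)‖ + ‖d (s (n + 1)) p‖)) atTop (𝓝 (‖A * B‖ * ‖w‖)) := by
    simpa using tendsto_const_nhds.add
      (((hr.const_mul ‖B‖).add (hp.comp (tendsto_add_atTop_nat 1))).const_mul ‖A‖)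
  have hw : ‖w‖ ≤ ‖A * B‖ * ‖w‖ := ge_of_tendsto_of_frequently hlim (hedge.mono hbound)
  have hw0 : ‖w‖ = 0 := by nlinarith [norm_nonneg w]
  exact (hd_eq_zero _ _).mp (norm_eq_zero.mp hw0)

end GraphKannan

theorem fixed_point_of_cstar_bmetric_graph_kannan_contraction_general
    {X : Type*} {𝔸 : Type*} [CStarAlgebra 𝔸] [PartialOrder 𝔸] [StarOrderedRing 𝔸]
    (d : X → X → 𝔸) (A : 𝔸)
    (hA_one : (1 : 𝔸) ≤ A)
    (hd_nonneg : ∀ x y, 0 ≤ d x y)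
    (hd_eq_zero : ∀ x y, d x y = 0 ↔ x = y)
    (hd_triangle : ∀ x y z, d x y ≤ A * (d x z + d z y))
    -- `X` is complete
    (hcomplete : ∀ s : ℕ → X,
      (∀ ε : ℝ, 0 < ε → ∃ N, ∀ m ≥ N, ∀ n ≥ N, ‖d (s m) (s n)‖ < ε) →
      ∃ p, Filter.Tendsto (fun n => ‖d (s n) p‖) Filter.atTop (nhds 0))
    (E : X → X → Prop)
    (f : X → X) (B : 𝔸)
    (hB_pos : 0 ≤ B) (hB_central : ∀ a : 𝔸, B * a = a * B)
    (hcontr : ∀ x y, (E x y ∨ E y x) →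
      d (f x) (f y) ≤ B * (d (f x) x + d (f y) y))
    (hnorm : ‖A * B‖ < 1 / 2)
    -- property (P3)
    (hP3 : ∀ (s : ℕ → X) (p : X),
      Filter.Tendsto (fun n => ‖d (s n) p‖) Filter.atTop (nhds 0) →
      (∀ n, E (s (n + 1)) (s n) ∨ E (s n) (s (n + 1))) →
      ∃ φ : ℕ → ℕ, StrictMono φ ∧ ∀ i, E (s (φ i)) p ∨ E p (s (φ i)))
    -- `C_f ≠ ∅`
    (hC : ∃ x : X, ∀ m n : ℕ, E (f^[n] x) (f^[m] x) ∨ E (f^[m] x) (f^[n] x)) :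
    (∃ x, f x = x) ∧
    -- property (P4) gives uniqueness of the fixed point
    ((∀ x y, f x = x → f y = y → (E x y ∨ E y x)) → ∃! x, f x = x) := by
  obtain ⟨x, hx⟩ := hC
  have hB_lt : ‖B‖ < 1 / 2 := lt_of_le_of_lt (CStarAlgebra.norm_le_norm_of_nonneg_of_le hB_pos
    (le_mul_of_one_le_left_of_central hA_one hB_pos hB_central)) hnorm
  have hstep := norm_dist_iterate_succ_le hd_nonneg hcontr hx
  have hr : Tendsto (fun n => ‖d (f^[n + 1] x) (f^[n] x)‖) atTop (𝓝 0) :=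
    tendsto_zero_of_le_mul_add_succ (fun _ => norm_nonneg _) (norm_nonneg B) hB_lt
      fun n => hstep (n + 1) n
  obtain ⟨p, hp⟩ := hcomplete (f^[·] x) (exists_forall_ge_lt_of_le_mul_add ‖B‖ hstep hr)
  obtain ⟨φ, hφ, hedge⟩ := hP3 (f^[·] x) p hp fun n => hx n (n + 1)
  have hfp : f p = p := fixed_of_tendsto_of_frequently_edge hA_one hB_pos hB_central
    (by linarith) hd_nonneg hd_eq_zero hd_triangle hcontr
    (fun n => Function.iterate_succ_apply' f n x) hr hp
    (hφ.tendsto_atTop.frequently (Frequently.of_forall hedge))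
  exact ⟨⟨p, hfp⟩, fun hP4 =>
    ⟨p, hfp, fun y hy => eq_of_fixed_of_edge hd_nonneg hd_eq_zero hcontr (hP4 y p hy hfp) hy hfp⟩⟩

/-- **Corollary 3.7.** Let `(X, 𝔸, d)` be a complete `C*`-algebra-valued `b`-metric space
with coefficient `A`, endowed with a graph `G` (edge relation `E` containing all loops),
and let `f : X → X` satisfy `d (f x) (f y) ⪯ B ⬝ (d (f x) x + d (f y) y)` whenever
`(x, y)` is an edge of the symmetrized graph `G̃`, where `B` is a positive element of `𝔸`
commuting with every element of `𝔸` and `‖A ⬝ B‖ < 1/2`.  Suppose property (P3) holds.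
Then:
(i) if `C_f ≠ ∅` then `f` has a fixed point;
(ii) if moreover property (P4) holds then `f` has a unique fixed point. -/
theorem fixed_point_of_cstar_bmetric_graph_kannan_contraction
    {X : Type*} {𝔸 : Type*} [CStarAlgebra 𝔸] [PartialOrder 𝔸] [StarOrderedRing 𝔸]
    (d : X → X → 𝔸) (A : 𝔸)
    (hA_pos : 0 ≤ A) (hA_one : (1 : 𝔸) ≤ A)
    (hd_nonneg : ∀ x y, 0 ≤ d x y)
    (hd_eq_zero : ∀ x y, d x y = 0 ↔ x = y)
    (hd_symm : ∀ x y, d x y = d y x)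
    (hd_triangle : ∀ x y z, d x y ≤ A * (d x z + d z y))
    -- `X` is complete
    (hcomplete : ∀ s : ℕ → X,
      (∀ ε : ℝ, 0 < ε → ∃ N, ∀ m ≥ N, ∀ n ≥ N, ‖d (s m) (s n)‖ < ε) →
      ∃ p, Filter.Tendsto (fun n => ‖d (s n) p‖) Filter.atTop (nhds 0))
    (E : X → X → Prop) (hE_refl : ∀ x, E x x)
    (f : X → X) (B : 𝔸)
    (hB_pos : 0 ≤ B) (hB_central : ∀ a : 𝔸, B * a = a * B)
    (hcontr : ∀ x y, (E x y ∨ E y x) →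
      d (f x) (f y) ≤ B * (d (f x) x + d (f y) y))
    (hnorm : ‖A * B‖ < 1 / 2)
    -- property (P3)
    (hP3 : ∀ (s : ℕ → X) (p : X),
      Filter.Tendsto (fun n => ‖d (s n) p‖) Filter.atTop (nhds 0) →
      (∀ n, E (s (n + 1)) (s n) ∨ E (s n) (s (n + 1))) →
      ∃ φ : ℕ → ℕ, StrictMono φ ∧ ∀ i, E (s (φ i)) p ∨ E p (s (φ i)))
    -- `C_f ≠ ∅`
    (hC : ∃ x : X, ∀ m n : ℕ, E (f^[n] x) (f^[m] x) ∨ E (f^[m] x) (f^[n] x)) :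
    (∃ x, f x = x) ∧
    -- property (P4) gives uniqueness of the fixed point
    ((∀ x y, f x = x → f y = y → (E x y ∨ E y x)) → ∃! x, f x = x) :=
  fixed_point_of_cstar_bmetric_graph_kannan_contraction_general d A hA_one hd_nonneg hd_eq_zero
    hd_triangle hcomplete E f B hB_pos hB_central hcontr hnorm hP3 hC
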